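/- arXiv:2106.13496 — 4 statements merged into one kernel-verified Lean document; each statement's English description precedes it below -/
import Mathlib

section
/- If G is a connected graph of order n with maximum degree Δ(G) = n-3, then the power domination number of G is at most 2. -/
open SimpleGraph

/-!
Let `v` be a vertex of maximum degree `n - 3`. Its closed neighbourhood misses at most two
vertices; adding one of them, `a`, to `{v}` gives a set `S = {v, a}` whose closed neighbourhood
misses at most one vertex `w`. In a connected graph `w` has a neighbour, which is monitored
and all of whose other neighbours are monitored, so it forces `w`.
-/

/-- `G.Obs S v` : vertex `v` eventually becomes monitored (black) when starting
from the set `S` and iteratively applying the zero-forcing propagation rule: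
if a monitored vertex has exactly one unmonitored neighbor, that neighbor
becomes monitored. -/
inductive SimpleGraph.Obs {V : Type*} (G : SimpleGraph V) (S : Set V) : V → Prop
  | init {v : V} : v ∈ S → G.Obs S v
  | force {v w : V} : G.Obs S v → G.Adj v w →
      (∀ u, G.Adj v u → u ≠ w → G.Obs S u) → G.Obs S w

/-- `S` is a zero forcing set of `G`. -/
def SimpleGraph.IsZeroForcingSet {V : Type*} (G : SimpleGraph V) (S : Set V) : Prop :=
  ∀ v, G.Obs S v

/-- The zero forcing number `Z(G)`. -/
noncomputable def SimpleGraph.zeroForcingNumber {V : Type*} (G : SimpleGraph V) : ℕ :=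
  sInf {n | ∃ S : Set V, S.ncard = n ∧ G.IsZeroForcingSet S}

/-- The closed neighborhood `N[S]` of a set of vertices. -/
def SimpleGraph.closedNbhdSet {V : Type*} (G : SimpleGraph V) (S : Set V) : Set V :=
  S ∪ {w | ∃ v ∈ S, G.Adj v w}

/-- `S` is a power dominating set of `G`: `N[S]` is a zero forcing set. -/
def SimpleGraph.IsPowerDominatingSet {V : Type*} (G : SimpleGraph V) (S : Set V) : Prop :=
  G.IsZeroForcingSet (G.closedNbhdSet S)

/-- The power domination number `γₚ(G)`. -/
noncomputable def SimpleGraph.powerDominationNumber {V : Type*} (G : SimpleGraph V) : ℕ :=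
  sInf {n | ∃ S : Set V, S.ncard = n ∧ G.IsPowerDominatingSet S}

namespace SimpleGraph

variable {V : Type*} {G : SimpleGraph V}

theorem subset_closedNbhdSet (S : Set V) : S ⊆ G.closedNbhdSet S :=
  Set.subset_union_left

theorem closedNbhdSet_mono {S T : Set V} (h : S ⊆ T) : G.closedNbhdSet S ⊆ G.closedNbhdSet T :=
  Set.union_subset_union h fun _ ⟨v, hv, hvw⟩ ↦ ⟨v, h hv, hvw⟩

theorem closedNbhdSet_singleton (v : V) : G.closedNbhdSet {v} = insert v (G.neighborSet v) := by
  ext w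
  simp [closedNbhdSet]

theorem Connected.isZeroForcingSet_of_subsingleton_compl (hconn : G.Connected) {M : Set V}
    (hM : M.Nonempty) (hMc : Mᶜ.Subsingleton) : G.IsZeroForcingSet M := by
  intro w
  by_cases hw : w ∈ M
  · exact .init hw
  obtain ⟨m, hm⟩ := hM
  have : Nontrivial V := ⟨⟨w, m, fun h ↦ hw (h ▸ hm)⟩⟩
  obtain ⟨b, hwb⟩ := hconn.preconnected.exists_adj_of_nontrivial w
  have mem_of_ne {u : V} (hu : u ≠ w) : u ∈ M := by_contra fun huM ↦ hu (hMc huM hw)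
  exact .force (.init (mem_of_ne hwb.ne.symm)) hwb.symm fun u _ hu ↦ .init (mem_of_ne hu)

theorem powerDominationNumber_le_ncard {S : Set V} (hS : G.IsPowerDominatingSet S) :
    G.powerDominationNumber ≤ S.ncard :=
  Nat.sInf_le ⟨S, rfl, hS⟩

theorem ncard_compl_closedNbhdSet_singleton [Fintype V] [DecidableRel G.Adj] (v : V) :
    (G.closedNbhdSet {v})ᶜ.ncard = Fintype.card V - (G.degree v + 1) := by
  have hcard : (G.closedNbhdSet {v}).ncard = G.degree v + 1 := by
    rw [closedNbhdSet_singleton, Set.ncard_insert_of_notMem (by simp),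
      ← Nat.card_coe_set_eq, Nat.card_eq_fintype_card, card_neighborSet_eq_degree]
  have hsum := Set.ncard_add_ncard_compl (G.closedNbhdSet {v})
  rw [Nat.card_eq_fintype_card] at hsum
  omega

theorem Connected.powerDominationNumber_le_two_of_card_le_degree_add_three [Fintype V]
    [DecidableRel G.Adj] (hconn : G.Connected) {v : V} (hv : Fintype.card V ≤ G.degree v + 3) :
    G.powerDominationNumber ≤ 2 := by
  set C := (G.closedNbhdSet {v})ᶜ
  have hC : C.ncard ≤ 2 := by
    rw [ncard_compl_closedNbhdSet_singleton]
    omega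
  obtain ⟨a, ha⟩ : ∃ a, (C \ {a}).ncard ≤ 1 := by
    by_cases hne : C.Nonempty
    · obtain ⟨a, ha⟩ := hne
      exact ⟨a, by rw [Set.ncard_sdiff_singleton_of_mem ha]; omega⟩
    · refine ⟨v, ?_⟩
      rw [Set.not_nonempty_iff_eq_empty.mp hne]
      simp
  have hsub : (G.closedNbhdSet {v, a})ᶜ ⊆ C \ {a} := by
    rw [Set.sdiff_eq, ← Set.compl_union]
    exact Set.compl_subset_compl.mpr (Set.union_subset (closedNbhdSet_mono (by simp))
      (Set.singleton_subset_iff.mpr (subset_closedNbhdSet _ (by simp))))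
  have hpd : G.IsPowerDominatingSet {v, a} :=
    hconn.isZeroForcingSet_of_subsingleton_compl ⟨v, subset_closedNbhdSet _ (by simp)⟩
      ((Set.ncard_le_one_iff_subsingleton.mp ha).anti hsub)
  calc G.powerDominationNumber ≤ ({v, a} : Set V).ncard := powerDominationNumber_le_ncard hpd
    _ ≤ 2 := (Set.ncard_insert_le _ _).trans (by simp)

end SimpleGraph

theorem stmt2 {V : Type*} [Fintype V] (G : SimpleGraph V) [DecidableRel G.Adj]
    (hconn : G.Connected) (hΔ : G.maxDegree = Fintype.card V - 3) :
    G.powerDominationNumber ≤ 2 := by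
  have : Nonempty V := hconn.nonempty
  obtain ⟨v, hv⟩ := G.exists_maximal_degree_vertex
  exact hconn.powerDominationNumber_le_two_of_card_le_degree_add_three (v := v) (by omega)
end

section
/- If G is a connected graph of order n with maximum degree Δ(G) = n-4, then the power domination number of G is at most 2. -/
open SimpleGraph

lemma forceLast {V : Type*} (G : SimpleGraph V) (S : Set V) (w : V)
    (h : ∀ z, z ≠ w → G.Obs S z) (hw : ∃ y, G.Adj y w) :
    G.IsZeroForcingSet S := by
  intro z
  by_cases hz : z = w
  · subst hz
    obtain ⟨y, hy⟩ := hw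
    exact Obs.force (h y hy.ne) hy (fun u hu hne => h u hne)
  · exact h z hz

lemma forceTwo {V : Type*} (G : SimpleGraph V) (S : Set V) (u w x : V)
    (h : ∀ z, z ≠ u → z ≠ w → G.Obs S z)
    (hxw : x ≠ w) (hxu : G.Adj x u) (hxnw : ¬ G.Adj x w)
    (hw : ∃ y, G.Adj y w) :
    G.IsZeroForcingSet S := by
  have hu : G.Obs S u :=
    Obs.force (h x hxu.ne hxw) hxu (fun z hz hne => h z hne (by rintro rfl; exact hxnw hz))
  refine forceLast G S w (fun z hz => ?_) hw
  by_cases hzu : z = u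
  · subst hzu; exact hu
  · exact h z hzu hz

lemma pds_sep {V : Type*} (G : SimpleGraph V) (v p u w x : V)
    (hA : ∀ z, z ≠ p → z ≠ u → z ≠ w → z = v ∨ G.Adj v z)
    (hxw : x ≠ w) (hxu : G.Adj x u) (hxnw : ¬ G.Adj x w)
    (hw : ∃ y, G.Adj y w) :
    G.IsPowerDominatingSet {v, p} := by
  apply forceTwo G _ u w x _ hxw hxu hxnw hw
  intro z hzu hzw
  apply Obs.init
  by_cases hzp : z = p
  · exact Or.inl (by simp [hzp])
  · rcases hA z hzp hzu hzw with h | h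
    · exact Or.inl (by simp [h])
    · exact Or.inr ⟨v, by simp, h⟩

lemma pds_one {V : Type*} (G : SimpleGraph V) (v p u w : V)
    (hA : ∀ z, z ≠ p → z ≠ u → z ≠ w → z = v ∨ G.Adj v z)
    (hpu : G.Adj p u) (hw : ∃ y, G.Adj y w) :
    G.IsPowerDominatingSet {v, p} := by
  apply forceLast G _ w _ hw
  intro z hzw
  apply Obs.init
  by_cases hzp : z = p
  · exact Or.inl (by simp [hzp])
  by_cases hzu : z = u
  · exact Or.inr ⟨p, by simp, hzu ▸ hpu⟩
  rcases hA z hzp hzu hzw with h | h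
  · exact Or.inl (by simp [h])
  · exact Or.inr ⟨v, by simp, h⟩

lemma exists_adj' {V : Type*} [Fintype V] (G : SimpleGraph V) (hconn : G.Connected)
    (h2 : 1 < Fintype.card V) (c : V) : ∃ y, G.Adj y c := by
  obtain ⟨u, hu⟩ := Fintype.exists_ne_of_one_lt_card h2 c
  obtain ⟨w⟩ := hconn.preconnected c u
  cases w with
  | nil => exact absurd rfl hu
  | cons h p => exact ⟨_, h.symm⟩

lemma pds_le_two {V : Type*} (G : SimpleGraph V) (S : Set V)
    (h : G.IsPowerDominatingSet S) (hc : S.ncard ≤ 2) :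
    G.powerDominationNumber ≤ 2 :=
  le_trans (Nat.sInf_le ⟨S, rfl, h⟩) hc

theorem stmt3 {V : Type*} [Fintype V] (G : SimpleGraph V) [DecidableRel G.Adj]
    (hconn : G.Connected) (hΔ : G.maxDegree = Fintype.card V - 4) :
    G.powerDominationNumber ≤ 2 := by
  classical
  have hne : Nonempty V := hconn.nonempty
  obtain ⟨v, hv⟩ := G.exists_maximal_degree_vertex
  have card_le : ∀ x y : V, ({x, y} : Set V).ncard ≤ 2 :=
    fun x y => (Set.ncard_insert_le x {y}).trans (by simp)
  by_cases h5 : 5 ≤ Fintype.card V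
  · -- main case
    have hdeg : G.degree v = Fintype.card V - 4 := hv.symm.trans hΔ
    have hne2 : 1 < Fintype.card V := by omega
    have nbr : ∀ z : V, ∃ y, G.Adj y z := fun z => exists_adj' G hconn hne2 z
    have hF : (Finset.univ \ insert v (G.neighborFinset v)).card = 3 := by
      rw [Finset.card_sdiff_of_subset (Finset.subset_univ _),
        Finset.card_insert_of_notMem (G.notMem_neighborFinset_self v),
        G.card_neighborFinset_eq_degree, Finset.card_univ]
      omega
    obtain ⟨a, b, c, hab, hac, hbc, habc⟩ := Finset.card_eq_three.mp hF
    have hA : ∀ z, z ≠ a → z ≠ b → z ≠ c → z = v ∨ G.Adj v z := by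
      intro z h1 h2 h3
      have hz : z ∉ Finset.univ \ insert v (G.neighborFinset v) := by
        rw [habc]; simp [h1, h2, h3]
      simp only [Finset.mem_sdiff, Finset.mem_univ, true_and, not_not] at hz
      rcases Finset.mem_insert.mp hz with h | h
      · exact Or.inl h
      · exact Or.inr ((G.mem_neighborFinset v z).mp h)
    by_cases hI : ∃ t, (t = a ∨ G.Adj t a) ∧ (t = b ∨ G.Adj t b) ∧ (t = c ∨ G.Adj t c)
    · obtain ⟨t, h1, h2, h3⟩ := hI
      refine pds_le_two G {v, t} (fun z => Obs.init ?_) (card_le v t)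
      have mem2 : z = v ∨ z = t ∨ G.Adj v z ∨ G.Adj t z →
          z ∈ G.closedNbhdSet ({v, t} : Set V) := by
        rintro (rfl | rfl | h | h)
        · exact Or.inl (by simp)
        · exact Or.inl (by simp)
        · exact Or.inr ⟨v, by simp, h⟩
        · exact Or.inr ⟨t, by simp, h⟩
      apply mem2
      by_cases hza : z = a
      · subst hza
        rcases h1 with h | h
        · exact Or.inr (Or.inl h.symm)
        · exact Or.inr (Or.inr (Or.inr h))
      by_cases hzb : z = b
      · subst hzb
        rcases h2 with h | h
        · exact Or.inr (Or.inl h.symm)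
        · exact Or.inr (Or.inr (Or.inr h))
      by_cases hzc : z = c
      · subst hzc
        rcases h3 with h | h
        · exact Or.inr (Or.inl h.symm)
        · exact Or.inr (Or.inr (Or.inr h))
      rcases hA z hza hzb hzc with h | h
      · exact Or.inl h
      · exact Or.inr (Or.inr (Or.inl h))
    · by_cases hab' : G.Adj a b
      · exact pds_le_two G {v, a} (pds_one G v a b c hA hab' (nbr c)) (card_le v a)
      by_cases hac' : G.Adj a c
      · exact pds_le_two G {v, a}
          (pds_one G v a c b (fun z h1 h2 h3 => hA z h1 h3 h2) hac' (nbr b)) (card_le v a)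
      by_cases hP2 : ∃ x, x ≠ b ∧ G.Adj x c ∧ ¬ G.Adj x b
      · obtain ⟨x, h1, h2, h3⟩ := hP2
        exact pds_le_two G {v, a}
          (pds_sep G v a c b x (fun z h1 h2 h3 => hA z h1 h3 h2) h1 h2 h3 (nbr b)) (card_le v a)
      by_cases hP3 : ∃ x, x ≠ c ∧ G.Adj x a ∧ ¬ G.Adj x c
      · obtain ⟨x, h1, h2, h3⟩ := hP3
        exact pds_le_two G {v, b}
          (pds_sep G v b a c x (fun z h1 h2 h3 => hA z h2 h1 h3) h1 h2 h3 (nbr c)) (card_le v b)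
      exfalso
      obtain ⟨t, hta⟩ := nbr a
      have htc : t ≠ c := fun h => hac' ((h ▸ hta).symm)
      have htc' : G.Adj t c := by
        by_contra h
        exact hP3 ⟨t, htc, hta, h⟩
      have htb : t ≠ b := fun h => hab' ((h ▸ hta).symm)
      have htb' : G.Adj t b := by
        by_contra h
        exact hP2 ⟨t, htb, htc', h⟩
      exact hI ⟨t, Or.inr hta, Or.inr htb', Or.inr htc'⟩
  · -- small case: Fintype.card V = 1
    have hcard1 : Fintype.card V = 1 := by
      by_contra h1
      have h2 : 1 < Fintype.card V := by
        have : 0 < Fintype.card V := Fintype.card_pos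
        omega
      obtain ⟨y, hy⟩ := exists_adj' G hconn h2 v
      have hpos : 0 < G.degree v := (G.degree_pos_iff_exists_adj v).mpr ⟨y, hy.symm⟩
      have hd := G.degree_le_maxDegree v
      omega
    obtain ⟨x, hx⟩ := Fintype.card_eq_one_iff.mp hcard1
    apply pds_le_two G {x} (fun z => Obs.init (Or.inl (by simp [hx z]))) (by simp)
end

section
/- Let G = K_{r₁,...,r_k} be the complete k-partite graph with k ≥ 2 parts of sizes r₁ ≤ r₂ ≤ ... ≤ r_k. If r₁ ≤ 2 then γ_p(G) = 1, and if r₁ ≥ 3 then γ_p(G) = 2. -/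
open SimpleGraph

/-- If `M` is "stalled" (every monitored vertex with an unmonitored neighbor has at
least two unmonitored neighbors), then nothing outside `M` ever gets observed. -/
lemma obs_stalled {V : Type*} (G : SimpleGraph V) (M : Set V)
    (h : ∀ x ∈ M, ∀ w, G.Adj x w → w ∉ M → ∃ u, G.Adj x u ∧ u ≠ w ∧ u ∉ M) :
    ∀ v, G.Obs M v → v ∈ M := by
  intro v hv
  induction hv with
  | init h' => exact h'
  | force hx hadj hall ihx ihall =>
    by_contra hw
    obtain ⟨u, hau, hne, hnm⟩ := h _ ihx _ hadj hw
    exact hnm (ihall u hau hne)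

lemma three_mem {α : Type*} [Fintype α] {s : Set α} (h : 3 ≤ s.ncard) (v w : α) :
    ∃ u ∈ s, u ≠ v ∧ u ≠ w := by
  by_contra hc
  push_neg at hc
  have hsub : s ⊆ {v, w} := by
    intro x hx
    rcases eq_or_ne x v with h1 | h1
    · exact Or.inl h1
    · exact Or.inr (hc x hx h1)
  have h1 := Set.ncard_le_ncard hsub (Set.toFinite _)
  have h2 : ({v, w} : Set α).ncard ≤ 2 := by
    have := Set.ncard_insert_le v ({w} : Set α)
    simpa using this
  omega

theorem stmt6 {V : Type*} [Fintype V] {k : ℕ} (hk : 2 ≤ k) (f : V → Fin k)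
    (hsurj : Function.Surjective f) (G : SimpleGraph V)
    (hAdj : ∀ v w, G.Adj v w ↔ f v ≠ f w) :
    ((∃ i, {v | f v = i}.ncard ≤ 2) → G.powerDominationNumber = 1) ∧
    ((∀ i, 3 ≤ {v | f v = i}.ncard) → G.powerDominationNumber = 2) := by
  set T := {n | ∃ S : Set V, S.ncard = n ∧ G.IsPowerDominatingSet S} with hT
  have hnontriv : Nontrivial (Fin k) := Fin.nontrivial_iff_two_le.mpr hk
  obtain ⟨v0, hv0⟩ := hsurj ⟨0, by omega⟩
  -- membership in the closed neighborhood of a singleton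
  have hMsing : ∀ v x : V, x ∈ G.closedNbhdSet {v} ↔ (x = v ∨ f x ≠ f v) := by
    intro v x
    constructor
    · rintro (h | ⟨v', hv', hadj⟩)
      · exact Or.inl h
      · rw [Set.mem_singleton_iff] at hv'; subst hv'
        exact Or.inr (Ne.symm ((hAdj v' x).1 hadj))
    · rintro (h | h)
      · exact Or.inl h
      · exact Or.inr ⟨v, rfl, (hAdj v x).2 (Ne.symm h)⟩
  -- 0 is never in T
  have hzero : 0 ∉ T := by
    rintro ⟨S, hS0, hpd⟩
    have hSe : S = ∅ := (Set.ncard_eq_zero (Set.toFinite S)).mp hS0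
    subst hSe
    have hcn : G.closedNbhdSet (∅ : Set V) = ∅ := by
      simp [SimpleGraph.closedNbhdSet]
    rw [SimpleGraph.IsPowerDominatingSet, hcn] at hpd
    exact obs_stalled G ∅ (by simp) v0 (hpd v0)
  constructor
  · -- some part has ≤ 2 vertices
    rintro ⟨i, hi⟩
    obtain ⟨v, hv⟩ := hsurj i
    obtain ⟨j, hj⟩ := exists_ne (f v)
    obtain ⟨x, hxj⟩ := hsurj j
    have hxv : f x ≠ f v := by rw [hxj]; exact hj
    have h1 : 1 ∈ T := by
      refine ⟨{v}, Set.ncard_singleton v, ?_⟩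
      intro u
      by_cases hufv : f u = f v
      · by_cases huv : u = v
        · exact Obs.init ((hMsing v u).2 (Or.inl huv))
        · refine Obs.force (v := x) (Obs.init ((hMsing v x).2 (Or.inr hxv)))
            ((hAdj x u).2 (by rw [hufv]; exact hxv)) ?_
          intro u' hadj hu'
          by_cases hu'fv : f u' = f v
          · by_cases hu'v : u' = v
            · exact Obs.init ((hMsing v u').2 (Or.inl hu'v))
            · exfalso
              have h3 : 2 < {w | f w = i}.ncard := by
                refine (Set.two_lt_ncard (Set.toFinite _)).mpr
                  ⟨v, hv, u, by rw [Set.mem_setOf_eq, hufv, hv], u',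
                    by rw [Set.mem_setOf_eq, hu'fv, hv], Ne.symm huv, Ne.symm hu'v,
                    Ne.symm hu'⟩
              omega
          · exact Obs.init ((hMsing v u').2 (Or.inr hu'fv))
      · exact Obs.init ((hMsing v u).2 (Or.inr hufv))
    have hmem := Nat.sInf_mem (⟨1, h1⟩ : T.Nonempty)
    have hle := Nat.sInf_le h1
    have hne0 : sInf T ≠ 0 := fun h => hzero (h ▸ hmem)
    have hPD : G.powerDominationNumber = sInf T := rfl
    rw [hPD]
    omega
  · -- all parts have ≥ 3 vertices
    intro h3
    obtain ⟨b, hb⟩ := hsurj ⟨1, by omega⟩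
    have hfab : f v0 ≠ f b := by rw [hv0, hb]; simp
    have h2 : 2 ∈ T := by
      refine ⟨{v0, b}, Set.ncard_pair (fun h => hfab (h ▸ rfl)), ?_⟩
      have huniv : G.closedNbhdSet {v0, b} = Set.univ := by
        ext u
        simp only [Set.mem_univ, iff_true, SimpleGraph.closedNbhdSet, Set.mem_union,
          Set.mem_setOf_eq]
        by_cases hu : f u = f v0
        · exact Or.inr ⟨b, Or.inr rfl, (hAdj b u).2 (by rw [hu]; exact Ne.symm hfab)⟩
        · exact Or.inr ⟨v0, Or.inl rfl, (hAdj v0 u).2 (Ne.symm hu)⟩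
      rw [SimpleGraph.IsPowerDominatingSet, huniv]
      intro u
      exact Obs.init (Set.mem_univ u)
    have hone : 1 ∉ T := by
      rintro ⟨S, hS1, hpd⟩
      obtain ⟨v, rfl⟩ := Set.ncard_eq_one.mp hS1
      set M := G.closedNbhdSet {v} with hM
      have hstall : ∀ x ∈ M, ∀ w, G.Adj x w → w ∉ M → ∃ u, G.Adj x u ∧ u ≠ w ∧ u ∉ M := by
        intro x hx w haxw hwM
        have hwfv : f w = f v := by
          by_contra h
          exact hwM ((hMsing v w).2 (Or.inr h))
        have hxfv : f x ≠ f v := by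
          rcases (hMsing v x).1 hx with h | h
          · exfalso
            exact (hAdj x w).1 haxw (by rw [h, hwfv])
          · exact h
        obtain ⟨u, hu, huv, huw⟩ := three_mem (h3 (f v)) v w
        rw [Set.mem_setOf_eq] at hu
        refine ⟨u, (hAdj x u).2 (by rw [hu]; exact hxfv), huw, ?_⟩
        intro hmem
        rcases (hMsing v u).1 hmem with h | h
        · exact huv h
        · exact h hu
      obtain ⟨u0, hu0, hu0v, -⟩ := three_mem (h3 (f v)) v v
      rw [Set.mem_setOf_eq] at hu0
      have : u0 ∈ M := obs_stalled G M hstall u0 (hpd u0)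
      rcases (hMsing v u0).1 this with h | h
      · exact hu0v h
      · exact h hu0
    have hmem := Nat.sInf_mem (⟨2, h2⟩ : T.Nonempty)
    have hle := Nat.sInf_le h2
    have hne0 : sInf T ≠ 0 := fun h => hzero (h ▸ hmem)
    have hne1 : sInf T ≠ 1 := fun h => hone (h ▸ hmem)
    have hPD : G.powerDominationNumber = sInf T := rfl
    rw [hPD]
    omega
end

section
/- For every connected graph G, the power domination number of the shadow graph S(G) satisfies γ_p(G) ≤ γ_p(S(G)) ≤ 2γ_p(G). -/
/-!
Folding `S(G)` onto `G` by `Sum.elim id id` (each vertex and its shadow go to the same vertex)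
sends every force of `S(G)` to a force of `G` or to a vertex whose twin is already observed,
because twins have the same neighbours; so a power dominating set of `S(G)` projects onto one of
`G`. Conversely, if `S` power dominates `G`, then `S` together with its shadows power dominates
`S(G)`: a force `a → w` of `G` is replayed as `inr a → inl w` and then `inl a → inr w`.
-/

open SimpleGraph

/-- The shadow graph of `G`: for each vertex `v` (copy `Sum.inl v`) a shadow vertex
`Sum.inr v` is added, adjacent exactly to the `G`-neighbors of `v`. -/
def SimpleGraph.shadowGraph {V : Type*} (G : SimpleGraph V) : SimpleGraph (V ⊕ V) :=
  SimpleGraph.fromRel (fun x y =>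
    match x, y with
    | Sum.inl a, Sum.inl b => G.Adj a b
    | Sum.inl a, Sum.inr b => G.Adj a b
    | _, _ => False)

namespace SimpleGraph

variable {V : Type*} {G : SimpleGraph V}

theorem Obs.mono {S S' : Set V} (hS : S ⊆ S') {v : V} (h : G.Obs S v) : G.Obs S' v := by
  induction h with
  | init hv => exact .init (hS hv)
  | force _ hvw _ ihv ihu => exact .force ihv hvw ihu

theorem exists_isPowerDominatingSet_ncard_eq (G : SimpleGraph V) :
    ∃ S : Set V, G.IsPowerDominatingSet S ∧ S.ncard = G.powerDominationNumber := by
  have hne : {n | ∃ S : Set V, S.ncard = n ∧ G.IsPowerDominatingSet S}.Nonempty :=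
    ⟨_, Set.univ, rfl, fun v => .init (Or.inl (Set.mem_univ v))⟩
  obtain ⟨S, hcard, hS⟩ := Nat.sInf_mem hne
  exact ⟨S, hS, hcard⟩

@[simp]
theorem shadowGraph_adj_inl_inl {a b : V} : G.shadowGraph.Adj (.inl a) (.inl b) ↔ G.Adj a b := by
  simp only [shadowGraph, fromRel_adj, ne_eq, Sum.inl.injEq]
  exact ⟨fun ⟨_, h⟩ => h.elim id (·.symm), fun h => ⟨h.ne, .inl h⟩⟩

@[simp]
theorem shadowGraph_adj_inl_inr {a b : V} : G.shadowGraph.Adj (.inl a) (.inr b) ↔ G.Adj a b := by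
  simp [shadowGraph]

@[simp]
theorem shadowGraph_adj_inr_inl {a b : V} : G.shadowGraph.Adj (.inr a) (.inl b) ↔ G.Adj a b := by
  simp [shadowGraph, G.adj_comm b a]

@[simp]
theorem shadowGraph_adj_inr_inr {a b : V} : ¬ G.shadowGraph.Adj (.inr a) (.inr b) := by
  simp [shadowGraph]

theorem Adj.sumElim_id_of_shadowGraph {x y : V ⊕ V} (h : G.shadowGraph.Adj x y) :
    G.Adj (Sum.elim id id x) (Sum.elim id id y) := by
  rcases x with a | a <;> rcases y with b | b <;> simp at h ⊢ <;> exact h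

theorem Obs.sumElim_id_of_shadowGraph {T : Set (V ⊕ V)} {x : V ⊕ V}
    (h : G.shadowGraph.Obs T x) : G.Obs (Sum.elim id id '' T) (Sum.elim id id x) := by
  induction h with
  | init hx => exact .init (Set.mem_image_of_mem _ hx)
  | @force v w _ hvw _ ihv ihu =>
    rcases v with a | a <;> rcases w with b | b
    · simpa using ihu (.inr b) (by simpa using hvw) (by simp)
    · simpa using ihu (.inl b) (by simpa using hvw) (by simp)
    · refine .force ihv (by simpa using hvw) fun c hc hcb => ?_
      simpa using ihu (.inl c) (by simpa using hc) (by simpa using hcb)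
    · simp at hvw

theorem image_sumElim_id_closedNbhdSet_subset (T : Set (V ⊕ V)) :
    Sum.elim id id '' G.shadowGraph.closedNbhdSet T ⊆ G.closedNbhdSet (Sum.elim id id '' T) := by
  rintro _ ⟨x, hx | ⟨y, hy, hyx⟩, rfl⟩
  · exact .inl (Set.mem_image_of_mem _ hx)
  · exact .inr ⟨_, Set.mem_image_of_mem _ hy, hyx.sumElim_id_of_shadowGraph⟩

theorem IsPowerDominatingSet.of_shadowGraph {T : Set (V ⊕ V)}
    (hT : G.shadowGraph.IsPowerDominatingSet T) : G.IsPowerDominatingSet (Sum.elim id id '' T) :=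
  fun v => (hT (.inl v)).sumElim_id_of_shadowGraph.mono (image_sumElim_id_closedNbhdSet_subset T)

theorem Obs.shadowGraph_inl_and_inr {S : Set V} {v : V} (h : G.Obs S v) :
    G.shadowGraph.Obs (Sum.elim id id ⁻¹' S) (.inl v) ∧
      G.shadowGraph.Obs (Sum.elim id id ⁻¹' S) (.inr v) := by
  induction h with
  | init hv => exact ⟨.init hv, .init hv⟩
  | @force a w _ haw _ iha ihu =>
    have hw : G.shadowGraph.Obs (Sum.elim id id ⁻¹' S) (.inl w) := by
      refine .force iha.2 (by simpa using haw) ?_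
      rintro (c | c) hc hcw
      · exact (ihu c (by simpa using hc) (by simpa using hcw)).1
      · simp at hc
    refine ⟨hw, .force iha.1 (by simpa using haw) ?_⟩
    rintro (c | c) hc hcw
    · obtain rfl | hne := eq_or_ne c w
      · exact hw
      · exact (ihu c (by simpa using hc) hne).1
    · exact (ihu c (by simpa using hc) (by simpa using hcw)).2

theorem preimage_sumElim_id_closedNbhdSet_subset (S : Set V) :
    Sum.elim id id ⁻¹' G.closedNbhdSet S ⊆ G.shadowGraph.closedNbhdSet (Sum.elim id id ⁻¹' S) := by
  rintro (w | w) (hw | ⟨v, hv, hvw⟩)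
  · exact .inl hw
  · exact .inr ⟨.inl v, hv, by simpa using hvw⟩
  · exact .inl hw
  · exact .inr ⟨.inl v, hv, by simpa using hvw⟩

theorem IsPowerDominatingSet.shadowGraph {S : Set V} (hS : G.IsPowerDominatingSet S) :
    G.shadowGraph.IsPowerDominatingSet (Sum.elim id id ⁻¹' S) := by
  rintro (v | v)
  · exact (hS v).shadowGraph_inl_and_inr.1.mono (preimage_sumElim_id_closedNbhdSet_subset S)
  · exact (hS v).shadowGraph_inl_and_inr.2.mono (preimage_sumElim_id_closedNbhdSet_subset S)

end SimpleGraph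

theorem Set.ncard_image_sumElim_id_le {α : Type*} (T : Set (α ⊕ α)) :
    (Sum.elim id id '' T).ncard ≤ T.ncard := by
  by_cases hT : T.Finite
  · exact Set.ncard_image_le hT
  · suffices (Sum.elim id id '' T).Infinite by rw [this.ncard]; exact Nat.zero_le _
    intro himg
    refine hT (Set.finite_preimage_inl_and_inr.mp ⟨himg.subset ?_, himg.subset ?_⟩) <;>
      exact fun a ha => ⟨_, ha, rfl⟩

theorem Set.ncard_preimage_sumElim_id {α : Type*} (S : Set α) :
    (Sum.elim id id ⁻¹' S).ncard = 2 * S.ncard := by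
  have : Sum.elim id id ⁻¹' S = Set.sumEquiv.symm (S, S) := by
    ext (a | a) <;> simp
  rw [this, Set.ncard_sumEquiv_symm_apply, two_mul]

theorem stmt17_general {V : Type*} (G : SimpleGraph V) :
    G.powerDominationNumber ≤ G.shadowGraph.powerDominationNumber ∧
    G.shadowGraph.powerDominationNumber ≤ 2 * G.powerDominationNumber := by
  constructor
  · obtain ⟨T, hT, hTcard⟩ := G.shadowGraph.exists_isPowerDominatingSet_ncard_eq
    calc G.powerDominationNumber ≤ (Sum.elim id id '' T).ncard :=
          powerDominationNumber_le_ncard hT.of_shadowGraph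
      _ ≤ T.ncard := Set.ncard_image_sumElim_id_le T
      _ = G.shadowGraph.powerDominationNumber := hTcard
  · obtain ⟨S, hS, hScard⟩ := G.exists_isPowerDominatingSet_ncard_eq
    calc G.shadowGraph.powerDominationNumber ≤ (Sum.elim id id ⁻¹' S).ncard :=
          powerDominationNumber_le_ncard hS.shadowGraph
      _ = 2 * G.powerDominationNumber := by rw [Set.ncard_preimage_sumElim_id, hScard]

theorem stmt17 {V : Type*} (G : SimpleGraph V) (hconn : G.Connected) :
    G.powerDominationNumber ≤ G.shadowGraph.powerDominationNumber ∧
    G.shadowGraph.powerDominationNumber ≤ 2 * G.powerDominationNumber :=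
  stmt17_general G
end
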